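/- arXiv:2111.13870 — 3 statements merged into one kernel-verified Lean document; each statement's English description precedes it below -/
import Mathlib

section
/- Let S be a closed subset of a real normed vector space X which is epi-Lipschitzian at x̄ ∈ bdry S. If the Clarke tangent cone T(S,x̄) contains a closed hyperplane H of X, then T(bdry S, x̄) = H. -/
open Filter Metric Set Topology

/-- `S` is epi-Lipschitzian at `x` : there is a direction `v ≠ 0` and `γ > 0` with
`S ∩ B(x,γ) + t·B(v,γ) ⊆ S` for all `t ∈ (0,γ)`. -/
def EpiLipschitzAt {X : Type*} [NormedAddCommGroup X] [NormedSpace ℝ X]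
    (S : Set X) (x : X) : Prop :=
  ∃ v : X, v ≠ 0 ∧ ∃ γ : ℝ, 0 < γ ∧
    ∀ t : ℝ, 0 < t → t < γ → ∀ s ∈ S ∩ Metric.ball x γ, ∀ w ∈ Metric.ball v γ,
      s + t • w ∈ S

/-- The Clarke tangent cone to `S` at `x`. -/
def ClarkeTangentCone {X : Type*} [NormedAddCommGroup X] [NormedSpace ℝ X]
    (S : Set X) (x : X) : Set X :=
  {v | ∀ V ∈ 𝓝 v, ∃ U ∈ 𝓝 x, ∃ lam : ℝ, 0 < lam ∧
    ∀ t : ℝ, 0 < t → t < lam → ∀ y ∈ U ∩ S, ∃ w ∈ V, y + t • w ∈ S}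

/-- The Clarke normal cone : negative polar of the Clarke tangent cone. -/
def ClarkeNormalCone {X : Type*} [NormedAddCommGroup X] [NormedSpace ℝ X]
    (S : Set X) (x : X) : Set (X →L[ℝ] ℝ) :=
  {p | ∀ h ∈ ClarkeTangentCone S x, p h ≤ 0}

/-- Clarke generalized directional derivative of `f` at `x` in direction `h`. -/
noncomputable def clarkeDeriv {X : Type*} [NormedAddCommGroup X] [NormedSpace ℝ X]
    (f : X → ℝ) (x : X) (h : X) : ℝ :=
  Filter.limsup (fun q : X × ℝ => (f (q.1 + q.2 • h) - f q.1) / q.2)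
    ((𝓝 x) ×ˢ (𝓝[>] (0 : ℝ)))

/-- The Clarke subdifferential of `f` at `x`. -/
def ClarkeSubdiff {X : Type*} [NormedAddCommGroup X] [NormedSpace ℝ X]
    (f : X → ℝ) (x : X) : Set (X →L[ℝ] ℝ) :=
  {p | ∀ h : X, p h ≤ clarkeDeriv f x h}

/-- Signed distance function to `S`. -/
noncomputable def signedDistSet {X : Type*} [NormedAddCommGroup X] (S : Set X) (x : X) : ℝ :=
  Metric.infDist x S - Metric.infDist x Sᶜ

/-- `f` is Lipschitz continuous in some neighbourhood of `x`. -/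
def LipschitzNear {X Y : Type*} [PseudoMetricSpace X] [PseudoMetricSpace Y]
    (f : X → Y) (x : X) : Prop :=
  ∃ K : NNReal, ∃ U ∈ 𝓝 x, LipschitzOnWith K f U

/-- `g` is strictly Hadamard differentiable at `x` with derivative `D`. -/
def HasStrictHadamardDerivAt {X Y : Type*} [NormedAddCommGroup X] [NormedSpace ℝ X]
    [NormedAddCommGroup Y] [NormedSpace ℝ Y] (g : X → Y) (D : X →L[ℝ] Y) (x : X) : Prop :=
  ∀ h : X, Filter.Tendsto
    (fun q : ℝ × X × X => (q.1)⁻¹ • (g (q.2.1 + q.1 • q.2.2) - g q.2.1))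
    ((𝓝[>] (0 : ℝ)) ×ˢ (𝓝 x) ×ˢ (𝓝 h)) (𝓝 (D h))

/-- `g` is strictly Hadamard differentiable at `x`. -/
def StrictHadamardDiffAt {X Y : Type*} [NormedAddCommGroup X] [NormedSpace ℝ X]
    [NormedAddCommGroup Y] [NormedSpace ℝ Y] (g : X → Y) (x : X) : Prop :=
  ∃ D : X →L[ℝ] Y, HasStrictHadamardDerivAt g D x

/-- `S` is compactly epi-Lipschitzian (CEL) at `x`. -/
def CELAt {X : Type*} [NormedAddCommGroup X] [NormedSpace ℝ X] (S : Set X) (x : X) : Prop :=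
  ∃ γ : ℝ, 0 < γ ∧ ∃ H : Set X, IsCompact H ∧
    ∀ t ∈ Set.Icc (0 : ℝ) γ, ∀ s ∈ S ∩ Metric.ball x γ, ∀ b ∈ Metric.ball (0 : X) 1,
      ∃ s' ∈ S, ∃ h ∈ H, s + t • b = s' + t • h

/-- The contingent (Bouligand) cone to `S` at `x`. -/
def contingentCone {X : Type*} [NormedAddCommGroup X] [NormedSpace ℝ X]
    (S : Set X) (x : X) : Set X :=
  {v | ∀ ε : ℝ, 0 < ε → ∀ δ : ℝ, 0 < δ →
    ∃ t : ℝ, 0 < t ∧ t < δ ∧ ∃ w : X, ‖w - v‖ < ε ∧ x + t • w ∈ S}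

/-- Kuratowski upper limit of a family of sets along a filter. -/
def setLimsup {α X : Type*} [NormedAddCommGroup X] (l : Filter α) (F : α → Set X) : Set X :=
  {h | Filter.liminf (fun a => Metric.infDist h (F a)) l = 0}

/-- Kuratowski lower limit of a family of sets along a filter. -/
def setLiminf {α X : Type*} [NormedAddCommGroup X] (l : Filter α) (F : α → Set X) : Set X :=
  {h | Filter.Tendsto (fun a => Metric.infDist h (F a)) l (𝓝 0)}

section Aux
variable {X : Type*} [NormedAddCommGroup X] [NormedSpace ℝ X]

def HyperTangentAt (S : Set X) (x u : X) : Prop :=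
  ∃ ε : ℝ, 0 < ε ∧ ∃ δ : ℝ, 0 < δ ∧
    ∀ t : ℝ, 0 < t → t < δ → ∀ y ∈ S ∩ ball x δ, ∀ w ∈ ball u ε, y + t • w ∈ S

lemma lemA {S : Set X} {x v : X} {γ : ℝ} (hγ : 0 < γ)
    (hepi : ∀ t : ℝ, 0 < t → t < γ → ∀ s ∈ S ∩ ball x γ, ∀ w ∈ ball v γ, s + t • w ∈ S)
    {h : X} (hh : h ∈ ClarkeTangentCone S x) {c : ℝ} (hc : 0 < c) :
    HyperTangentAt S x (h + c • v) := by
  obtain ⟨U, hU, lam, hlam, hP⟩ := hh (ball h (c*γ/4)) (ball_mem_nhds _ (by positivity))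
  obtain ⟨r, hr, hrU⟩ := Metric.mem_nhds_iff.mp hU
  set M : ℝ := 1 + ‖h‖ + c*γ/4 with hM
  have hM0 : 0 < M := by positivity
  refine ⟨c*γ/4, by positivity, min (min r lam) (min (γ/(2*c)) (γ/(2*M))), by positivity, ?_⟩
  intro t ht htδ y hy w hw
  have hyS := hy.1
  have hyx : ‖y - x‖ < min (min r lam) (min (γ/(2*c)) (γ/(2*M))) := by
    simpa [mem_ball, dist_eq_norm] using hy.2
  have htlam : t < lam := lt_of_lt_of_le htδ ((min_le_left _ _).trans (min_le_right _ _))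
  obtain ⟨wh, hwh, hws⟩ := hP t ht htlam y ⟨hrU (by
      simp only [mem_ball, dist_eq_norm]
      exact hyx.trans_le ((min_le_left _ _).trans (min_le_left _ _))), hyS⟩
  have hwhn : ‖wh - h‖ < c*γ/4 := by simpa [mem_ball, dist_eq_norm] using hwh
  have hδ1 : min (min r lam) (min (γ/(2*c)) (γ/(2*M))) ≤ γ/(2*M) :=
    (min_le_right _ _).trans (min_le_right _ _)
  have hδ2 : min (min r lam) (min (γ/(2*c)) (γ/(2*M))) ≤ γ/(2*c) :=
    (min_le_right _ _).trans (min_le_left _ _)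
  have hsball : y + t • wh ∈ ball x γ := by
    simp only [mem_ball, dist_eq_norm]
    have h1 : ‖y + t • wh - x‖ ≤ ‖y - x‖ + t * ‖wh‖ := by
      calc ‖y + t • wh - x‖ = ‖(y - x) + t • wh‖ := by congr 1; abel
        _ ≤ ‖y - x‖ + ‖t • wh‖ := norm_add_le _ _
        _ = ‖y - x‖ + t * ‖wh‖ := by rw [norm_smul, Real.norm_of_nonneg ht.le]
    have h2 : ‖wh‖ ≤ ‖h‖ + c*γ/4 := by
      calc ‖wh‖ = ‖h + (wh - h)‖ := by congr 1; abel
        _ ≤ ‖h‖ + ‖wh - h‖ := norm_add_le _ _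
        _ ≤ ‖h‖ + c*γ/4 := by linarith
    have hty : t * (2*M) < γ := (lt_div_iff₀ (by positivity)).mp (htδ.trans_le hδ1)
    have hyx' : ‖y - x‖ * (2*M) < γ := by
      have := (lt_div_iff₀ (by positivity)).mp (hyx.trans_le hδ1)
      exact this
    have hMge : ‖wh‖ ≤ M := by simp only [hM]; linarith
    have hM1 : (1:ℝ) ≤ M := by simp only [hM]; nlinarith [norm_nonneg h]
    have e1 : t * ‖wh‖ ≤ t * M := mul_le_mul_of_nonneg_left hMge ht.le
    have e2 : ‖y - x‖ ≤ ‖y - x‖ * M := le_mul_of_one_le_right (norm_nonneg _) hM1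
    have e3 : t * (2*M) = 2*(t*M) := by ring
    have e4 : ‖y - x‖ * (2*M) = 2*(‖y - x‖*M) := by ring
    linarith
  have hct : c * t < γ := by
    have h2c : t * (2*c) < γ := (lt_div_iff₀ (by positivity)).mp (htδ.trans_le hδ2)
    nlinarith
  have hw' : c⁻¹ • (w - wh) ∈ ball v γ := by
    simp only [mem_ball, dist_eq_norm]
    have : c⁻¹ • (w - wh) - v = c⁻¹ • ((w - (h + c • v)) + (h - wh)) := by
      have hcc : c⁻¹ * c = 1 := inv_mul_cancel₀ hc.ne'
      match_scalars <;> simp [hcc] <;> ring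
    rw [this, norm_smul]
    have hwn : ‖w - (h + c • v)‖ < c*γ/4 := by simpa [mem_ball, dist_eq_norm] using hw
    have hhn : ‖h - wh‖ < c*γ/4 := by rwa [norm_sub_rev]
    have : ‖(w - (h + c • v)) + (h - wh)‖ ≤ ‖w - (h + c • v)‖ + ‖h - wh‖ := norm_add_le _ _
    rw [Real.norm_of_nonneg (inv_nonneg.mpr hc.le)]
    calc c⁻¹ * ‖(w - (h + c • v)) + (h - wh)‖ ≤ c⁻¹ * (c*γ/4 + c*γ/4) := by
          apply mul_le_mul_of_nonneg_left (by linarith) (inv_nonneg.mpr hc.le)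
      _ = γ/2 := by field_simp; ring
      _ < γ := by linarith
  have := hepi (c*t) (by positivity) hct (y + t • wh) ⟨hws, hsball⟩ (c⁻¹ • (w - wh)) hw'
  have heq : y + t • wh + (c*t) • (c⁻¹ • (w - wh)) = y + t • w := by
    have hcc : c * t * c⁻¹ = t := by field_simp
    rw [smul_smul, hcc, smul_sub]; abel
  rwa [heq] at this


lemma ball_subset_of_smul {S : Set X} {y : X} {t ε : ℝ} (ht : 0 < t) (hε : 0 < ε)
    (hz : ∀ z ∈ ball (0:X) ε, y + t • z ∈ S) : y ∈ interior S := by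
  rw [mem_interior]
  refine ⟨Metric.ball y (t*ε), ?_, isOpen_ball, mem_ball_self (by positivity)⟩
  intro p hp
  have : p = y + t • (t⁻¹ • (p - y)) := by
    rw [smul_smul, mul_inv_cancel₀ ht.ne', one_smul]; abel
  rw [this]
  apply hz
  simp only [mem_ball, dist_eq_norm, sub_zero, norm_smul, Real.norm_of_nonneg (inv_nonneg.mpr ht.le)]
  have hpy : ‖p - y‖ < t*ε := by simpa [mem_ball, dist_eq_norm] using hp
  rw [inv_mul_lt_iff₀ ht]
  linarith

/-- halving: points reached by hypertangent directions are interior -/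
lemma lemB {S : Set X} {x u : X} (hu : HyperTangentAt S x u) :
    ∃ ε : ℝ, 0 < ε ∧ ∃ δ : ℝ, 0 < δ ∧
      ∀ t : ℝ, 0 < t → t < δ → ∀ y ∈ S ∩ ball x δ, ∀ w ∈ ball u (ε/2),
        y + t • w ∈ interior S := by
  obtain ⟨ε, hε, δ, hδ, hP⟩ := hu
  set M : ℝ := 2 + ‖u‖ + ε with hMdef
  have hM0 : 0 < M := by positivity
  have hM2 : 2 ≤ M := by simp only [hMdef]; nlinarith [norm_nonneg u]
  refine ⟨ε, hε, δ/M, by positivity, ?_⟩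
  intro t ht htδ y hy w hw
  have hwu : ‖w - u‖ < ε/2 := by simpa [mem_ball, dist_eq_norm] using hw
  have hwn : ‖w‖ ≤ ‖u‖ + ε := by
    calc ‖w‖ = ‖u + (w - u)‖ := by congr 1; abel
      _ ≤ ‖u‖ + ‖w - u‖ := norm_add_le _ _
      _ ≤ ‖u‖ + ε := by linarith
  have hyx : ‖y - x‖ < δ/M := by simpa [mem_ball, dist_eq_norm] using hy.2
  have hδM : δ/M ≤ δ/2 := by
    apply div_le_div_of_nonneg_left hδ.le (by norm_num) hM2
  have htδ' : t/2 < δ := by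
    have : t < δ/2 := htδ.trans_le hδM
    linarith
  have hwball : w ∈ ball u ε := by
    simp only [mem_ball, dist_eq_norm]; linarith
  have hs : y + (t/2) • w ∈ S := hP (t/2) (by positivity) htδ' y ⟨hy.1, by
    simp only [mem_ball, dist_eq_norm]
    exact lt_of_lt_of_le (hyx.trans_le hδM) (by linarith)⟩ w hwball
  have hsball : y + (t/2) • w ∈ ball x δ := by
    simp only [mem_ball, dist_eq_norm]
    have h1 : ‖y + (t/2) • w - x‖ ≤ ‖y - x‖ + (t/2) * ‖w‖ := by
      calc ‖y + (t/2) • w - x‖ = ‖(y - x) + (t/2) • w‖ := by congr 1; abel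
        _ ≤ ‖y - x‖ + ‖(t/2) • w‖ := norm_add_le _ _
        _ = ‖y - x‖ + (t/2) * ‖w‖ := by rw [norm_smul, Real.norm_of_nonneg (by positivity : (0:ℝ) ≤ t/2)]
    have e1 : (t/2) * ‖w‖ ≤ (t/2) * (‖u‖ + ε) := mul_le_mul_of_nonneg_left hwn (by positivity)
    have hMred : t * M < δ := (lt_div_iff₀ hM0).mp htδ
    have hyxM : ‖y - x‖ * M < δ := (lt_div_iff₀ hM0).mp hyx
    have e2 : ‖y - x‖ ≤ ‖y - x‖ * M := le_mul_of_one_le_right (norm_nonneg _) (by linarith)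
    have e3 : t * M = t * 2 + t * (‖u‖ + ε) := by simp only [hMdef]; ring
    nlinarith [norm_nonneg (y - x), ht.le]
  apply ball_subset_of_smul (t := t/2) (by positivity) (half_pos hε)
  intro z hz
  have hz' : ‖z‖ < ε/2 := by simpa [mem_ball, dist_eq_norm] using hz
  have hwz : w + z ∈ ball u ε := by
    simp only [mem_ball, dist_eq_norm]
    calc ‖w + z - u‖ = ‖(w - u) + z‖ := by congr 1; abel
      _ ≤ ‖w - u‖ + ‖z‖ := norm_add_le _ _
      _ < ε := by linarith
  have := hP (t/2) (by positivity) htδ' (y + (t/2) • w) ⟨hs, hsball⟩ (w + z) hwz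
  have heq : y + (t/2) • w + (t/2) • (w + z) = y + t • w + (t/2) • z := by
    match_scalars <;> ring
  rwa [heq] at this

lemma lemC {S : Set X} (hS : IsClosed S) {x u : X} (hu : HyperTangentAt S x (-u)) :
    ∃ ε : ℝ, 0 < ε ∧ ∃ δ : ℝ, 0 < δ ∧
      ∀ t : ℝ, 0 < t → t < δ → ∀ y ∈ frontier S ∩ ball x δ, ∀ w ∈ ball u (ε/2),
        y + t • w ∉ S := by
  obtain ⟨ε, hε, δ, hδ, hP⟩ := hu
  set M : ℝ := 2 + ‖u‖ + ε with hMdef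
  have hM0 : 0 < M := by positivity
  have hM2 : 2 ≤ M := by simp only [hMdef]; nlinarith [norm_nonneg u]
  refine ⟨ε, hε, min δ (δ/M), by positivity, ?_⟩
  intro t ht htδ y hy w hw hmem
  have htδ0 : t < δ := htδ.trans_le (min_le_left _ _)
  have htδM : t < δ/M := htδ.trans_le (min_le_right _ _)
  have hwu : ‖w - u‖ < ε/2 := by simpa [mem_ball, dist_eq_norm] using hw
  have hwn : ‖w‖ ≤ ‖u‖ + ε := by
    calc ‖w‖ = ‖u + (w - u)‖ := by congr 1; abel
      _ ≤ ‖u‖ + ‖w - u‖ := norm_add_le _ _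
      _ ≤ ‖u‖ + ε := by linarith
  have hyx : ‖y - x‖ < δ/M := (by simpa [mem_ball, dist_eq_norm] using hy.2 :
      ‖y - x‖ < min δ (δ/M)).trans_le (min_le_right _ _)
  have hsball : y + t • w ∈ ball x δ := by
    simp only [mem_ball, dist_eq_norm]
    have h1 : ‖y + t • w - x‖ ≤ ‖y - x‖ + t * ‖w‖ := by
      calc ‖y + t • w - x‖ = ‖(y - x) + t • w‖ := by congr 1; abel
        _ ≤ ‖y - x‖ + ‖t • w‖ := norm_add_le _ _
        _ = ‖y - x‖ + t * ‖w‖ := by rw [norm_smul, Real.norm_of_nonneg ht.le]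
    have e1 : t * ‖w‖ ≤ t * (‖u‖ + ε) := mul_le_mul_of_nonneg_left hwn ht.le
    have hMred : t * M < δ := (lt_div_iff₀ hM0).mp htδM
    have hyxM : ‖y - x‖ * M < δ := (lt_div_iff₀ hM0).mp hyx
    have e2 : ‖y - x‖ ≤ ‖y - x‖ * M := le_mul_of_one_le_right (norm_nonneg _) (by linarith)
    have e3 : t * M = t * 2 + t * (‖u‖ + ε) := by simp only [hMdef]; ring
    nlinarith [norm_nonneg (y - x), ht.le]
  have hyint : y ∈ interior S := by
    apply ball_subset_of_smul (t := t) ht (half_pos hε)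
    intro z hz
    have hz' : ‖z‖ < ε/2 := by simpa [mem_ball, dist_eq_norm] using hz
    have hwz : -w + z ∈ ball (-u) ε := by
      simp only [mem_ball, dist_eq_norm]
      calc ‖-w + z - -u‖ = ‖-(w - u) + z‖ := by congr 1; abel
        _ ≤ ‖-(w - u)‖ + ‖z‖ := norm_add_le _ _
        _ = ‖w - u‖ + ‖z‖ := by rw [norm_neg]
        _ < ε := by linarith
    have := hP t ht htδ0 (y + t • w) ⟨hmem, hsball⟩ (-w + z) hwz
    have heq : y + t • w + t • (-w + z) = y + t • z := by match_scalars <;> ring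
    rwa [heq] at this
  have : y ∉ interior S := by
    have hfr := hy.1
    rw [frontier, mem_diff] at hfr
    exact hfr.2
  exact this hyint

lemma key {S : Set X} (hS : IsClosed S) {x : X} (hxb : x ∈ frontier S)
    {v : X} {γ : ℝ} (hγ : 0 < γ)
    (hepi : ∀ t : ℝ, 0 < t → t < γ → ∀ s ∈ S ∩ ball x γ, ∀ w ∈ ball v γ, s + t • w ∈ S)
    (l : X →L[ℝ] ℝ) (hHT : {y : X | l y = 0} ⊆ ClarkeTangentCone S x) (hlv : 0 < l v) :
    ClarkeTangentCone (frontier S) x = {y : X | l y = 0} := by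
  have hxS : x ∈ S := hS.frontier_subset hxb
  have hxint : x ∉ interior S := by rw [frontier, mem_diff] at hxb; exact hxb.2
  ext u
  simp only [mem_setOf_eq]
  constructor
  · intro hu
    by_contra hne
    rcases (Ne.lt_or_gt hne) with hneg | hpos
    · -- l u < 0 : use lemC
      set c := -(l u) / l v with hcdef
      have hc : 0 < c := div_pos (by linarith) hlv
      have hclv : c * l v = -(l u) := div_mul_cancel₀ _ hlv.ne'
      have hh : -(u + c • v) ∈ {y : X | l y = 0} := by
        simp only [mem_setOf_eq, map_neg, map_add, map_smul, smul_eq_mul]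
        rw [hclv]; ring
      have hht := lemA hγ hepi (hHT hh) hc
      have heq : -(u + c • v) + c • v = -u := by abel
      rw [heq] at hht
      obtain ⟨ε, hε, δ, hδ, hC⟩ := lemC hS hht
      obtain ⟨U, hU, lam, hlam, hQ⟩ := hu (ball u (ε/2)) (ball_mem_nhds _ (by positivity))
      have ht0 : 0 < min lam δ / 2 := by positivity
      obtain ⟨w, hwB, hwf⟩ := hQ (min lam δ / 2) ht0
        (by have := min_le_left lam δ; linarith) x ⟨mem_of_mem_nhds hU, hxb⟩
      exact hC (min lam δ / 2) ht0 (by have := min_le_right lam δ; linarith)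
        x ⟨hxb, mem_ball_self hδ⟩ w hwB (hS.frontier_subset hwf)
    · -- 0 < l u : use lemB
      set c := l u / l v with hcdef
      have hc : 0 < c := div_pos hpos hlv
      have hclv : c * l v = l u := div_mul_cancel₀ _ hlv.ne'
      have hh : u - c • v ∈ {y : X | l y = 0} := by
        simp only [mem_setOf_eq, map_sub, map_smul, smul_eq_mul]
        rw [hclv]; ring
      have hht := lemA hγ hepi (hHT hh) hc
      have heq : u - c • v + c • v = u := by abel
      rw [heq] at hht
      obtain ⟨ε, hε, δ, hδ, hB⟩ := lemB hht
      obtain ⟨U, hU, lam, hlam, hQ⟩ := hu (ball u (ε/2)) (ball_mem_nhds _ (by positivity))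
      have ht0 : 0 < min lam δ / 2 := by positivity
      obtain ⟨w, hwB, hwf⟩ := hQ (min lam δ / 2) ht0
        (by have := min_le_left lam δ; linarith) x ⟨mem_of_mem_nhds hU, hxb⟩
      have hint := hB (min lam δ / 2) ht0 (by have := min_le_right lam δ; linarith)
        x ⟨hxS, mem_ball_self hδ⟩ w hwB
      rw [frontier, mem_diff] at hwf
      exact hwf.2 hint
  · intro hu V hV
    obtain ⟨ε, hε, hεV⟩ := Metric.mem_nhds_iff.mp hV
    set c := ε / (2*(‖v‖+1)) with hcdef
    have hv1 : (0:ℝ) < ‖v‖ + 1 := by positivity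
    have hc : 0 < c := by positivity
    have h1 := lemA hγ hepi (hHT hu) hc
    obtain ⟨ε₁, hε₁, δ₁, hδ₁, hB⟩ := lemB h1
    have hmemneg : -u ∈ {y : X | l y = 0} := by
      simp only [mem_setOf_eq, map_neg, hu, neg_zero]
    have h2 := lemA hγ hepi (hHT hmemneg) hc
    have heq2 : -u + c • v = -(u - c • v) := by abel
    rw [heq2] at h2
    obtain ⟨ε₂, hε₂, δ₂, hδ₂, hC⟩ := lemC hS h2
    refine ⟨ball x (min δ₁ δ₂), ball_mem_nhds _ (by positivity), min δ₁ δ₂, by positivity, ?_⟩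
    intro t ht htl y hy
    have hyf : y ∈ frontier S := hy.2
    have hyS : y ∈ S := hS.frontier_subset hyf
    have hyb1 : y ∈ ball x δ₁ := mem_of_mem_of_subset hy.1 (ball_subset_ball (min_le_left _ _))
    have hyb2 : y ∈ ball x δ₂ := mem_of_mem_of_subset hy.1 (ball_subset_ball (min_le_right _ _))
    have ht1 : t < δ₁ := htl.trans_le (min_le_left _ _)
    have ht2 : t < δ₂ := htl.trans_le (min_le_right _ _)
    set g : ℝ → X := fun θ => y + t • (u + ((2*θ - 1)*c) • v) with hgdef
    have hg1 : g 1 ∈ interior S := by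
      have he : g 1 = y + t • (u + c • v) := by
        simp only [hgdef]; norm_num
      rw [he]
      exact hB t ht ht1 y ⟨hyS, hyb1⟩ (u + c • v) (mem_ball_self (by positivity))
    have hg0 : g 0 ∉ S := by
      have he : g 0 = y + t • (u - c • v) := by
        simp only [hgdef]; norm_num
        match_scalars <;> ring
      rw [he]
      exact hC t ht ht2 y ⟨hyf, hyb2⟩ (u - c • v) (mem_ball_self (by positivity))
    have hgcont : Continuous g := by
      simp only [hgdef]
      fun_prop
    set A := {θ : ℝ | θ ∈ Icc (0:ℝ) 1 ∧ g θ ∈ S} with hAdef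
    have hAclosed : IsClosed A := by
      have : A = Icc (0:ℝ) 1 ∩ g ⁻¹' S := rfl
      rw [this]
      exact isClosed_Icc.inter (hS.preimage hgcont)
    have hA1 : (1:ℝ) ∈ A := ⟨⟨zero_le_one, le_refl 1⟩, interior_subset hg1⟩
    have hAbdd : BddBelow A := ⟨0, fun θ hθ => hθ.1.1⟩
    set θ₀ := sInf A with hθ₀def
    have hθ₀A : θ₀ ∈ A := hAclosed.csInf_mem ⟨1, hA1⟩ hAbdd
    have hθ₀0 : 0 < θ₀ := by
      rcases (hθ₀A.1.1).lt_or_eq with h | h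
      · exact h
      · exact absurd (h ▸ hθ₀A.2) hg0
    have hθ₀int : g θ₀ ∉ interior S := by
      intro hint
      have hnh : g ⁻¹' interior S ∈ 𝓝 θ₀ :=
        hgcont.continuousAt.preimage_mem_nhds (isOpen_interior.mem_nhds hint)
      obtain ⟨η, hη, hηsub⟩ := Metric.mem_nhds_iff.mp hnh
      set θ' := θ₀ - min η θ₀ / 2 with hθ'def
      have hmin : 0 < min η θ₀ := lt_min hη hθ₀0
      have hθ'A : θ' ∈ A := by
        refine ⟨⟨by have := min_le_right η θ₀; simp only [hθ'def]; linarith,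
          by have := hθ₀A.1.2; simp only [hθ'def]; linarith⟩, ?_⟩
        refine interior_subset (hηsub ?_)
        simp only [mem_ball, hθ'def, dist_eq_norm]
        rw [show θ₀ - min η θ₀ / 2 - θ₀ = -(min η θ₀ / 2) by ring, norm_neg,
          Real.norm_of_nonneg (by linarith)]
        have := min_le_left η θ₀; linarith
      have hle := csInf_le hAbdd hθ'A
      simp only [hθ'def] at hle
      rw [← hθ₀def] at hle
      linarith
    have hfront : g θ₀ ∈ frontier S := by
      rw [frontier, mem_diff]
      exact ⟨subset_closure hθ₀A.2, hθ₀int⟩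
    refine ⟨u + ((2*θ₀ - 1)*c) • v, hεV ?_, hfront⟩
    simp only [mem_ball, dist_eq_norm]
    rw [show u + ((2*θ₀ - 1)*c) • v - u = ((2*θ₀ - 1)*c) • v by abel, norm_smul]
    have habs : |2*θ₀ - 1| ≤ 1 := by
      rw [abs_le]
      constructor <;> [linarith [hθ₀A.1.1]; linarith [hθ₀A.1.2]]
    rw [Real.norm_eq_abs, abs_mul, abs_of_pos hc]
    have hcv : c * ‖v‖ < ε := by
      rw [hcdef, div_mul_eq_mul_div, div_lt_iff₀ (by positivity)]
      nlinarith [norm_nonneg v]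
    calc |2*θ₀ - 1| * c * ‖v‖ ≤ 1 * c * ‖v‖ := by
          apply mul_le_mul_of_nonneg_right (mul_le_mul_of_nonneg_right habs hc.le) (norm_nonneg v)
      _ = c * ‖v‖ := by ring
      _ < ε := hcv

end Aux

/-- if a closed set `S`, epi-Lipschitzian at `x̄ ∈ bdry S`, has
Clarke tangent cone containing a closed hyperplane `H`, then `T(bdry S,x̄) = H`. -/
theorem clarkeTangentCone_frontier_eq_hyperplane_of_epiLipschitz
    {X : Type*} [NormedAddCommGroup X] [NormedSpace ℝ X]
    (S : Set X) (hS : IsClosed S) (x : X) (hxb : x ∈ frontier S)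
    (hepi : EpiLipschitzAt S x)
    (l : X →L[ℝ] ℝ) (hl : l ≠ 0) (H : Set X) (hH : H = {y : X | l y = 0})
    (hHT : H ⊆ ClarkeTangentCone S x) :
    ClarkeTangentCone (frontier S) x = H := by
  obtain ⟨v, hv0, γ, hγ, hprop⟩ := hepi
  subst hH
  have hxS : x ∈ S := hS.frontier_subset hxb
  have hxint : x ∉ interior S := by rw [frontier, mem_diff] at hxb; exact hxb.2
  rcases lt_trichotomy (l v) 0 with hlv | hlv | hlv
  · have hset : {y : X | (-l) y = 0} = {y : X | l y = 0} := by
      ext y; simp [neg_eq_zero]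
    have := key hS hxb hγ hprop (-l) (by rw [hset]; exact hHT)
      (by simpa using hlv)
    rwa [hset] at this
  · -- l v = 0 : contradiction, x would be interior
    exfalso
    have h0 : (0:X) ∈ {y : X | l y = 0} := by simp
    have hA1 := lemA hγ hprop (hHT h0) one_pos
    rw [show (0:X) + (1:ℝ) • v = v by simp] at hA1
    have h2v : (-2:ℝ) • v ∈ {y : X | l y = 0} := by
      simp [hlv]
    have hA2 := lemA hγ hprop (hHT h2v) one_pos
    rw [show (-2:ℝ) • v + (1:ℝ) • v = -v by match_scalars <;> ring] at hA2
    obtain ⟨ε₁, hε₁, δ₁, hδ₁, hP₁⟩ := hA1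
    obtain ⟨ε₂, hε₂, δ₂, hδ₂, hP₂⟩ := hA2
    set t := min (min δ₁ δ₂) (δ₂/(1+‖v‖)) / 2 with htdef
    have hv1 : (0:ℝ) < 1 + ‖v‖ := by positivity
    have ht : 0 < t := by positivity
    have ht1 : t < δ₁ := by
      have h := min_le_left (min δ₁ δ₂) (δ₂/(1+‖v‖))
      have h' := min_le_left δ₁ δ₂
      simp only [htdef]; linarith
    have ht2 : t < δ₂ := by
      have h := min_le_left (min δ₁ δ₂) (δ₂/(1+‖v‖))
      have h' := min_le_right δ₁ δ₂
      simp only [htdef]; linarith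
    have htv : t * (1+‖v‖) < δ₂ := by
      have h := min_le_right (min δ₁ δ₂) (δ₂/(1+‖v‖))
      have h2 : t < δ₂/(1+‖v‖) := by simp only [htdef]; linarith
      exact (lt_div_iff₀ hv1).mp h2
    have hs : x + t • v ∈ S :=
      hP₁ t ht ht1 x ⟨hxS, mem_ball_self hδ₁⟩ v (mem_ball_self hε₁)
    have hsball : x + t • v ∈ ball x δ₂ := by
      simp only [mem_ball, dist_eq_norm]
      rw [show x + t • v - x = t • v by abel, norm_smul, Real.norm_of_nonneg ht.le]
      nlinarith [norm_nonneg v]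
    apply hxint
    apply ball_subset_of_smul ht hε₂
    intro z hz
    have hz' : ‖z‖ < ε₂ := by simpa [mem_ball, dist_eq_norm] using hz
    have hwz : -v + z ∈ ball (-v) ε₂ := by
      simp only [mem_ball, dist_eq_norm]
      rw [show -v + z - -v = z by abel]
      exact hz'
    have := hP₂ t ht ht2 (x + t • v) ⟨hs, hsball⟩ (-v + z) hwz
    have heq : x + t • v + t • (-v + z) = x + t • z := by match_scalars <;> ring
    rwa [heq] at this
  · exact key hS hxb hγ hprop l hHT hlv
end

section
/- Let X be a finite dimensional real normed space, Y a real Banach space, and g : X → Y a mapping which is locally Lipschitz around x̄ and strictly Hadamard differentiable at x̄ with derivative Dg(x̄). Then the Clarke tangent cone to the graph of g satisfies T(graph g, (x̄, g(x̄))) = graph Dg(x̄) = { (h, Dg(x̄)h) : h ∈ X }. -/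
open Filter Metric Set Topology

/-- Signed distance function to `S`. -/
noncomputable def signedDistToSet {X : Type*} [NormedAddCommGroup X] (S : Set X) (x : X) : ℝ :=
  Metric.infDist x S - Metric.infDist x Sᶜ

/-- for `g` locally Lipschitz around `x̄` (with `X` finite
dimensional) and strictly Hadamard differentiable at `x̄` with derivative `D`,
`T(graph g, (x̄, g x̄)) = graph D`. -/
theorem clarkeTangentCone_graph_eq_graph_deriv
    {X Y : Type*} [NormedAddCommGroup X] [NormedSpace ℝ X] [FiniteDimensional ℝ X]
    [NormedAddCommGroup Y] [NormedSpace ℝ Y] [CompleteSpace Y]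
    (g : X → Y) (x : X) (hg : LipschitzNear g x)
    (D : X →L[ℝ] Y) (hD : HasStrictHadamardDerivAt g D x) :
    ClarkeTangentCone {p : X × Y | p.2 = g p.1} (x, g x)
      = {p : X × Y | p.2 = D p.1} := by
  ext ⟨h, k⟩
  simp only [Set.mem_setOf_eq, ClarkeTangentCone]
  constructor
  · intro hv
    refine eq_of_forall_dist_le fun ε hε => ?_
    have hε2 : 0 < ε / 2 := by linarith
    have hball : Metric.ball (D h) (ε / 2) ∈ 𝓝 (D h) := Metric.ball_mem_nhds _ hε2
    have hpre := (hD h) hball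
    rw [Filter.mem_map, Filter.mem_prod_iff] at hpre
    obtain ⟨A, hA, BC, hBC, hsub⟩ := hpre
    rw [Filter.mem_prod_iff] at hBC
    obtain ⟨B, hB, C, hC, hsub2⟩ := hBC
    obtain ⟨δ, hδpos, hδC⟩ := Metric.mem_nhds_iff.mp hC
    set δ' : ℝ := min δ (ε / 2) with hδ'
    have hδ'pos : 0 < δ' := lt_min hδpos hε2
    have hV : (Metric.ball h δ' ×ˢ Metric.ball k δ') ∈ 𝓝 (h, k) :=
      prod_mem_nhds (Metric.ball_mem_nhds _ hδ'pos) (Metric.ball_mem_nhds _ hδ'pos)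
    obtain ⟨U, hU, lam, hlam, hmain⟩ := hv _ hV
    have hIoo : Set.Ioo (0 : ℝ) lam ∈ 𝓝[>] (0 : ℝ) :=
      Ioo_mem_nhdsGT_of_mem ⟨le_refl _, hlam⟩
    obtain ⟨t, htA, ht0, htlam⟩ :
        ∃ t, t ∈ A ∧ 0 < t ∧ t < lam := by
      obtain ⟨t, ht⟩ := Filter.nonempty_of_mem (Filter.inter_mem hA hIoo)
      exact ⟨t, ht.1, ht.2.1, ht.2.2⟩
    obtain ⟨w, hwV, hwS⟩ := hmain t ht0 htlam (x, g x)
      ⟨mem_of_mem_nhds hU, rfl⟩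
    simp only [Set.mem_prod] at hwV
    have hxB : x ∈ B := mem_of_mem_nhds hB
    have hw1C : w.1 ∈ C := hδC (Metric.ball_subset_ball (min_le_left _ _) hwV.1)
    have hmem : ((t, (x, w.1)) : ℝ × X × X) ∈ A ×ˢ (B ×ˢ C) := ⟨htA, hxB, hw1C⟩
    have hkey := hsub (Set.prod_mono (le_refl A) hsub2 hmem)
    simp only [Set.mem_preimage] at hkey
    have hgeq : g (x + t • w.1) = g x + t • w.2 := by
      have := hwS
      simp only [Set.mem_setOf_eq, Prod.snd_add, Prod.fst_add, Prod.smul_mk,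
        Prod.smul_fst, Prod.smul_snd] at this
      rw [← this]
    have hw2 : t⁻¹ • (g (x + t • w.1) - g x) = w.2 := by
      rw [hgeq]; simp [smul_smul, inv_mul_cancel₀ (ne_of_gt ht0)]
    rw [hw2] at hkey
    have h1 : dist w.2 (D h) < ε / 2 := Metric.mem_ball.mp hkey
    have h2 : dist k w.2 < ε / 2 :=
      lt_of_lt_of_le (Metric.mem_ball'.mp hwV.2) (min_le_right _ _)
    calc dist k (D h) ≤ dist k w.2 + dist w.2 (D h) := dist_triangle _ _ _
      _ ≤ ε := by linarith
  · intro hk V hV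
    rw [mem_nhds_prod_iff] at hV
    obtain ⟨V₁, hV₁, V₂, hV₂, hVsub⟩ := hV
    rw [hk] at hV₂
    have hpre := (hD h) hV₂
    rw [Filter.mem_map, Filter.mem_prod_iff] at hpre
    obtain ⟨A, hA, BC, hBC, hsub⟩ := hpre
    rw [Filter.mem_prod_iff] at hBC
    obtain ⟨B, hB, C, hC, hsub2⟩ := hBC
    obtain ⟨lam, hlam, hIoo⟩ := mem_nhdsGT_iff_exists_Ioo_subset.mp hA
    refine ⟨B ×ˢ Set.univ, prod_mem_nhds hB Filter.univ_mem, lam, hlam, ?_⟩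
    intro t ht0 htlam y hy
    obtain ⟨⟨hyB, -⟩, hyS⟩ := hy
    refine ⟨(h, t⁻¹ • (g (y.1 + t • h) - g y.1)), ?_, ?_⟩
    · apply hVsub
      refine ⟨mem_of_mem_nhds hV₁, ?_⟩
      have hmem : ((t, (y.1, h)) : ℝ × X × X) ∈ A ×ˢ (B ×ˢ C) :=
        ⟨hIoo ⟨ht0, htlam⟩, hyB, mem_of_mem_nhds hC⟩
      exact hsub (Set.prod_mono (le_refl A) hsub2 hmem)
    · simp only [Set.mem_setOf_eq, Prod.snd_add, Prod.fst_add, Prod.smul_mk]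
      rw [smul_inv_smul₀ (ne_of_gt ht0)]
      simp only [Set.mem_setOf_eq] at hyS
      rw [hyS]; abel
end

section
/- Let X and Y be finite dimensional real normed spaces and g : X → Y a mapping which is locally Lipschitz around x̄ and strictly Hadamard differentiable at x̄. Then K(graph g, (x̄, g(x̄))) = graph Dg(x̄), and the set-valued mapping x ↦ K(graph g, (x, g(x))) is continuous at x̄; that is, limsup_{x→x̄} K(graph g, (x, g(x))) = liminf_{x→x̄} K(graph g, (x, g(x))) = K(graph g, (x̄, g(x̄))). -/
open Filter Metric Set Topology

section MyHelpers

variable {X Y : Type*} [NormedAddCommGroup X] [NormedSpace ℝ X]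
  [NormedAddCommGroup Y] [NormedSpace ℝ Y]

lemma my_zero_mem_contingentCone {S : Set (X × Y)} {p : X × Y} (hp : p ∈ S) :
    (0 : X × Y) ∈ contingentCone S p := by
  intro ε hε δ hδ
  exact ⟨δ / 2, by positivity, by linarith, 0, by simpa using hε, by simpa using hp⟩

lemma my_key_estimate (g : X → Y) (x : X) (D : X →L[ℝ] Y)
    (hD : HasStrictHadamardDerivAt g D x) (h : X) {ε : ℝ} (hε : 0 < ε) :
    ∃ lam > (0 : ℝ), ∃ U ∈ 𝓝 x, ∃ r > (0 : ℝ),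
      ∀ t : ℝ, 0 < t → t < lam → ∀ y ∈ U, ∀ v : X, ‖v - h‖ < r →
        ‖t⁻¹ • (g (y + t • v) - g y) - D h‖ < ε := by
  have h1 : (fun q : ℝ × X × X => (q.1)⁻¹ • (g (q.2.1 + q.1 • q.2.2) - g q.2.1)) ⁻¹'
      Metric.ball (D h) ε ∈ (𝓝[>] (0 : ℝ)) ×ˢ (𝓝 x) ×ˢ (𝓝 h) :=
    (hD h) (Metric.ball_mem_nhds _ hε)
  obtain ⟨A, hA, B, hB, hAB⟩ := Filter.mem_prod_iff.1 h1
  obtain ⟨U, hU, V, hV, hUV⟩ := Filter.mem_prod_iff.1 hB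
  obtain ⟨lam, hlam, hIoo⟩ := mem_nhdsGT_iff_exists_Ioo_subset.1 hA
  obtain ⟨r, hr, hball⟩ := Metric.mem_nhds_iff.1 hV
  refine ⟨lam, hlam, U, hU, r, hr, ?_⟩
  intro t ht htlam y hy v hv
  have hmem : (t, y, v) ∈ A ×ˢ (U ×ˢ V) := by
    refine ⟨hIoo ⟨ht, htlam⟩, hy, hball ?_⟩
    simpa [Metric.mem_ball, dist_eq_norm] using hv
  have := hAB ⟨hmem.1, hUV hmem.2⟩
  simpa [Metric.mem_ball, dist_eq_norm] using this

lemma my_graph_step {g : X → Y} {y : X} {t : ℝ} (ht : t ≠ 0) {w : X × Y}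
    (hmem : (y, g y) + t • w ∈ {p : X × Y | p.2 = g p.1}) :
    w.2 = t⁻¹ • (g (y + t • w.1) - g y) := by
  simp only [Set.mem_setOf_eq, Prod.snd_add, Prod.fst_add, Prod.smul_snd, Prod.smul_fst] at hmem
  rw [← hmem]
  simp [inv_smul_smul₀ ht]

lemma my_graph_step' (g : X → Y) {y : X} {t : ℝ} (ht : t ≠ 0) (a : X) :
    (y, g y) + t • (a, t⁻¹ • (g (y + t • a) - g y)) ∈ {p : X × Y | p.2 = g p.1} := by
  simp [smul_inv_smul₀ ht]

lemma my_eq_of_forall {a b : Y} (h : ∀ ε : ℝ, 0 < ε → ‖a - b‖ < 2 * ε) : a = b := by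
  by_contra hne
  have h0 : 0 < ‖a - b‖ := norm_sub_pos_iff.2 hne
  have := h (‖a - b‖ / 4) (by positivity)
  linarith

lemma my_norm_pair (z : Y) (a : X) : ‖((0 : X), z)‖ = ‖z‖ := by
  simp [Prod.norm_def]

/-- Lemma A: the contingent cone to the graph at `(x, g x)` is contained in graph of `D`. -/
lemma my_cone_subset (g : X → Y) (x : X) (D : X →L[ℝ] Y)
    (hD : HasStrictHadamardDerivAt g D x) :
    contingentCone {p : X × Y | p.2 = g p.1} (x, g x) ⊆ {p : X × Y | p.2 = D p.1} := by
  intro p hp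
  show p.2 = D p.1
  apply my_eq_of_forall
  intro ε hε
  obtain ⟨lam, hlam, U, hU, r, hr, hest⟩ := my_key_estimate g x D hD p.1 hε
  obtain ⟨t, ht, htlam, w, hw, hmem⟩ := hp (min ε r) (lt_min hε hr) lam hlam
  have hw2 : w.2 = t⁻¹ • (g (x + t • w.1) - g x) := my_graph_step ht.ne' hmem
  have h1 : ‖w.1 - p.1‖ < r := by
    have := norm_fst_le (w - p)
    simp only [Prod.fst_sub] at this
    exact lt_of_le_of_lt this (lt_of_lt_of_le hw (min_le_right _ _))
  have h2 : ‖w.2 - p.2‖ < ε := by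
    have := norm_snd_le (w - p)
    simp only [Prod.snd_sub] at this
    exact lt_of_le_of_lt this (lt_of_lt_of_le hw (min_le_left _ _))
  have h3 : ‖w.2 - D p.1‖ < ε := by
    rw [hw2]; exact hest t ht htlam x (mem_of_mem_nhds hU) w.1 h1
  calc ‖p.2 - D p.1‖ ≤ ‖p.2 - w.2‖ + ‖w.2 - D p.1‖ := norm_sub_le_norm_sub_add_norm_sub _ _ _
    _ < ε + ε := by rw [norm_sub_rev] at h2; exact add_lt_add h2 h3
    _ = 2 * ε := by ring

/-- Lemma B: graph of `D` is contained in the contingent cone at `(x, g x)`. -/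
lemma my_subset_cone (g : X → Y) (x : X) (D : X →L[ℝ] Y)
    (hD : HasStrictHadamardDerivAt g D x) :
    {p : X × Y | p.2 = D p.1} ⊆ contingentCone {p : X × Y | p.2 = g p.1} (x, g x) := by
  intro p hp
  have hp' : p.2 = D p.1 := hp
  intro ε hε δ hδ
  have hT : Tendsto (fun t : ℝ => t⁻¹ • (g (x + t • p.1) - g x)) (𝓝[>] (0 : ℝ))
      (𝓝 (D p.1)) := by
    have hc : Tendsto (fun t : ℝ => (t, x, p.1)) (𝓝[>] (0 : ℝ))
        ((𝓝[>] (0 : ℝ)) ×ˢ (𝓝 x) ×ˢ (𝓝 p.1)) :=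
      tendsto_id.prodMk (tendsto_const_nhds.prodMk tendsto_const_nhds)
    exact (hD p.1).comp hc
  have h1 : ∀ᶠ t in 𝓝[>] (0 : ℝ),
      ‖t⁻¹ • (g (x + t • p.1) - g x) - D p.1‖ < ε := by
    have := hT (Metric.ball_mem_nhds (D p.1) hε)
    filter_upwards [this] with t ht
    simpa [Metric.mem_ball, dist_eq_norm] using ht
  have h2 : ∀ᶠ t in 𝓝[>] (0 : ℝ), t ∈ Set.Ioo (0 : ℝ) δ :=
    Ioo_mem_nhdsGT_of_mem ⟨le_refl 0, hδ⟩
  obtain ⟨t, hb, ht0, htδ⟩ := (h1.and h2).exists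
  refine ⟨t, ht0, htδ, (p.1, t⁻¹ • (g (x + t • p.1) - g x)), ?_, my_graph_step' g ht0.ne' p.1⟩
  have : (p.1, t⁻¹ • (g (x + t • p.1) - g x)) - p
      = ((0 : X), t⁻¹ • (g (x + t • p.1) - g x) - D p.1) := by
    ext <;> simp [hp']
  rw [this, my_norm_pair _ p.1]
  exact hb

/-- Lemma D': the set-limsup of the cones is contained in graph of `D`. -/
lemma my_setLimsup_subset (g : X → Y) (x : X) (D : X →L[ℝ] Y)
    (hD : HasStrictHadamardDerivAt g D x) :
    setLimsup (𝓝 x) (fun y => contingentCone {p : X × Y | p.2 = g p.1} (y, g y))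
      ⊆ {p : X × Y | p.2 = D p.1} := by
  intro p hp
  have hp' : Filter.liminf
      (fun y => Metric.infDist p (contingentCone {q : X × Y | q.2 = g q.1} (y, g y)))
      (𝓝 x) = 0 := hp
  show p.2 = D p.1
  apply my_eq_of_forall
  intro ε hε
  obtain ⟨lam, hlam, U, hU, r, hr, hest⟩ := my_key_estimate g x D hD p.1 hε
  set ρ := min ε r with hρdef
  have hρ : 0 < ρ := lt_min hε hr
  have hbdd : Filter.IsBoundedUnder (· ≥ ·) (𝓝 x)
      (fun y => Metric.infDist p (contingentCone {q : X × Y | q.2 = g q.1} (y, g y))) :=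
    Filter.isBoundedUnder_of ⟨0, fun y => Metric.infDist_nonneg⟩
  have hcob : Filter.IsCoboundedUnder (· ≥ ·) (𝓝 x)
      (fun y => Metric.infDist p (contingentCone {q : X × Y | q.2 = g q.1} (y, g y))) := by
    apply Filter.isCoboundedUnder_ge_of_le (𝓝 x) (x := ‖p‖)
    intro y
    have h0 : (0 : X × Y) ∈ contingentCone {q : X × Y | q.2 = g q.1} (y, g y) :=
      my_zero_mem_contingentCone rfl
    simpa [dist_zero_right] using Metric.infDist_le_dist_of_mem h0
  have hfreq : ∃ᶠ y in 𝓝 x,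
      Metric.infDist p (contingentCone {q : X × Y | q.2 = g q.1} (y, g y)) < ρ / 2 :=
    Filter.frequently_lt_of_liminf_lt hcob (by rw [hp']; positivity)
  have hUe : ∀ᶠ y in 𝓝 x, y ∈ U := hU
  obtain ⟨y, hylt, hyU⟩ := (hfreq.and_eventually hUe).exists
  have hne : (contingentCone {q : X × Y | q.2 = g q.1} (y, g y)).Nonempty :=
    ⟨0, my_zero_mem_contingentCone rfl⟩
  obtain ⟨q, hq, hdq⟩ := (Metric.infDist_lt_iff hne).1 hylt
  obtain ⟨t, ht, htlam, w, hw, hmem⟩ := hq (ρ / 2) (by positivity) lam hlam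
  have hw2 : w.2 = t⁻¹ • (g (y + t • w.1) - g y) := my_graph_step ht.ne' hmem
  have hq1 : ‖q.1 - p.1‖ ≤ dist p q := by
    rw [dist_comm, dist_eq_norm]
    have := norm_fst_le (q - p); simpa using this
  have hq2 : ‖p.2 - q.2‖ ≤ dist p q := by
    rw [dist_eq_norm]
    have := norm_snd_le (p - q); simpa using this
  have hw1 : ‖w.1 - q.1‖ ≤ ‖w - q‖ := by
    have := norm_fst_le (w - q); simpa using this
  have hw2' : ‖q.2 - w.2‖ ≤ ‖w - q‖ := by
    rw [norm_sub_rev]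
    have := norm_snd_le (w - q); simpa using this
  have h1 : ‖w.1 - p.1‖ < r := by
    calc ‖w.1 - p.1‖ ≤ ‖w.1 - q.1‖ + ‖q.1 - p.1‖ := norm_sub_le_norm_sub_add_norm_sub _ _ _
      _ < ρ / 2 + ρ / 2 := add_lt_add (lt_of_le_of_lt hw1 hw) (lt_of_le_of_lt hq1 hdq)
      _ = ρ := by ring
      _ ≤ r := min_le_right _ _
  have h3 : ‖w.2 - D p.1‖ < ε := by
    rw [hw2]; exact hest t ht htlam y hyU w.1 h1
  have h2 : ‖p.2 - w.2‖ < ε := by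
    calc ‖p.2 - w.2‖ ≤ ‖p.2 - q.2‖ + ‖q.2 - w.2‖ := norm_sub_le_norm_sub_add_norm_sub _ _ _
      _ < ρ / 2 + ρ / 2 := add_lt_add (lt_of_le_of_lt hq2 hdq) (lt_of_le_of_lt hw2' hw)
      _ = ρ := by ring
      _ ≤ ε := min_le_left _ _
  calc ‖p.2 - D p.1‖ ≤ ‖p.2 - w.2‖ + ‖w.2 - D p.1‖ := norm_sub_le_norm_sub_add_norm_sub _ _ _
    _ < ε + ε := add_lt_add h2 h3
    _ = 2 * ε := by ring

/-- Lemma C: graph of `D` is contained in the set-liminf of the cones. -/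
lemma my_subset_setLiminf [ProperSpace Y] (g : X → Y) (x : X) (D : X →L[ℝ] Y)
    (hD : HasStrictHadamardDerivAt g D x) :
    {p : X × Y | p.2 = D p.1} ⊆
      setLiminf (𝓝 x) (fun y => contingentCone {p : X × Y | p.2 = g p.1} (y, g y)) := by
  intro p hp
  have hp' : p.2 = D p.1 := hp
  show Tendsto (fun y => Metric.infDist p (contingentCone {q : X × Y | q.2 = g q.1} (y, g y)))
    (𝓝 x) (𝓝 0)
  rw [Metric.tendsto_nhds]
  intro ε hε
  obtain ⟨lam, hlam, U, hU, r, hr, hest⟩ := my_key_estimate g x D hD p.1 (half_pos hε)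
  filter_upwards [hU] with y hyU
  -- construct the nearby cone element
  set b : ℕ → Y := fun n =>
    (lam / ((n : ℝ) + 2))⁻¹ • (g (y + (lam / ((n : ℝ) + 2)) • p.1) - g y) with hb
  have htn : ∀ n : ℕ, 0 < lam / ((n : ℝ) + 2) := by
    intro n; positivity
  have htn' : ∀ n : ℕ, lam / ((n : ℝ) + 2) < lam := by
    intro n
    apply div_lt_self hlam
    have : (0 : ℝ) ≤ (n : ℝ) := Nat.cast_nonneg n
    linarith
  have hbmem : ∀ n, b n ∈ Metric.closedBall (D p.1) (ε / 2) := by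
    intro n
    rw [Metric.mem_closedBall, dist_eq_norm]
    exact le_of_lt (hest _ (htn n) (htn' n) y hyU p.1 (by simp [hr]))
  obtain ⟨ky, hky, φ, hφ, hbφ⟩ :=
    (isCompact_closedBall (D p.1) (ε / 2)).tendsto_subseq hbmem
  have hkmem : (p.1, ky) ∈ contingentCone {q : X × Y | q.2 = g q.1} (y, g y) := by
    intro ε' hε' δ' hδ'
    have ht0 : Tendsto (fun n : ℕ => lam / ((n : ℝ) + 2)) atTop (𝓝 0) := by
      apply Tendsto.const_div_atTop
      exact tendsto_atTop_add_const_right _ 2 tendsto_natCast_atTop_atTop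
    have h1 : ∀ᶠ n in atTop, lam / (((φ n : ℕ) : ℝ) + 2) < δ' :=
      (ht0.comp hφ.tendsto_atTop).eventually (gt_mem_nhds hδ')
    have h2 : ∀ᶠ n in atTop, ‖b (φ n) - ky‖ < ε' := by
      have := hbφ (Metric.ball_mem_nhds ky hε')
      filter_upwards [this] with n hn
      simpa [Metric.mem_ball, dist_eq_norm] using hn
    obtain ⟨n, hn1, hn2⟩ := (h1.and h2).exists
    refine ⟨lam / (((φ n : ℕ) : ℝ) + 2), htn (φ n), hn1, (p.1, b (φ n)), ?_, ?_⟩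
    · have : ((p.1 : X), b (φ n)) - (p.1, ky) = ((0 : X), b (φ n) - ky) := by ext <;> simp
      rw [this, my_norm_pair _ p.1]
      exact hn2
    · have hbn : b (φ n) = (lam / (((φ n : ℕ) : ℝ) + 2))⁻¹ •
          (g (y + (lam / (((φ n : ℕ) : ℝ) + 2)) • p.1) - g y) := by rw [hb]
      rw [hbn]
      exact my_graph_step' g (htn (φ n)).ne' p.1
  have hle : Metric.infDist p (contingentCone {q : X × Y | q.2 = g q.1} (y, g y))
      ≤ ε / 2 := by
    refine le_trans (Metric.infDist_le_dist_of_mem hkmem) ?_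
    have : p - ((p.1 : X), ky) = ((0 : X), p.2 - ky) := by ext <;> simp
    rw [dist_eq_norm, this, my_norm_pair _ p.1, hp']
    rw [norm_sub_rev]
    simpa [dist_eq_norm] using (Metric.mem_closedBall.1 hky)
  rw [Real.dist_eq, sub_zero, abs_of_nonneg Metric.infDist_nonneg]
  exact lt_of_le_of_lt hle (by linarith)

end MyHelpers

/-- in finite dimensions, for `g` locally Lipschitz around `x̄`
and strictly Hadamard differentiable there, `K(graph g,(x̄,g x̄)) = graph D` and
`x ↦ K(graph g, (x, g x))` is continuous at `x̄`. -/
theorem contingentCone_graph_eq_and_continuous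
    {X Y : Type*} [NormedAddCommGroup X] [NormedSpace ℝ X] [FiniteDimensional ℝ X]
    [NormedAddCommGroup Y] [NormedSpace ℝ Y] [FiniteDimensional ℝ Y]
    (g : X → Y) (x : X) (hg : LipschitzNear g x)
    (D : X →L[ℝ] Y) (hD : HasStrictHadamardDerivAt g D x) :
    contingentCone {p : X × Y | p.2 = g p.1} (x, g x) = {p : X × Y | p.2 = D p.1} ∧
      setLimsup (𝓝 x) (fun y => contingentCone {p : X × Y | p.2 = g p.1} (y, g y))
        = contingentCone {p : X × Y | p.2 = g p.1} (x, g x) ∧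
      setLiminf (𝓝 x) (fun y => contingentCone {p : X × Y | p.2 = g p.1} (y, g y))
        = contingentCone {p : X × Y | p.2 = g p.1} (x, g x) := by
  have P1 : contingentCone {p : X × Y | p.2 = g p.1} (x, g x) = {p : X × Y | p.2 = D p.1} :=
    Set.Subset.antisymm (my_cone_subset g x D hD) (my_subset_cone g x D hD)
  have hC := my_subset_setLiminf g x D hD
  have hD' := my_setLimsup_subset g x D hD
  have hsub : setLiminf (𝓝 x) (fun y => contingentCone {p : X × Y | p.2 = g p.1} (y, g y))
      ⊆ setLimsup (𝓝 x) (fun y => contingentCone {p : X × Y | p.2 = g p.1} (y, g y)) := by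
    intro p hp
    exact (hp : Tendsto _ _ _).liminf_eq
  refine ⟨P1, ?_, ?_⟩
  · apply Set.Subset.antisymm
    · rw [P1]; exact hD'
    · rw [P1]; exact fun p hp => hsub (hC hp)
  · apply Set.Subset.antisymm
    · rw [P1]; exact fun p hp => hD' (hsub hp)
    · rw [P1]; exact hC
end
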